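/- arXiv:math/0701853 — 2 statements merged into one kernel-verified Lean document; each statement's English description precedes it below -/
import Mathlib

section
/- Let G be a conjugacy closed loop (CC-loop) and let H be a normal subloop of G. Then the quotient loop G/H is a G-loop; hence if G/H possesses a non-trivial subloop, it is a Smarandache G-loop (SG-loop). -/
universe u v

section LoopDefs
variable {M : Type u}

/-- `(M, op)` with two-sided identity `e` is a loop: translations are bijections. -/
def IsLoop (op : M → M → M) (e : M) : Prop :=
  (∀ a, op e a = a) ∧ (∀ a, op a e = a) ∧
  (∀ a b : M, ∃! x, op a x = b) ∧ (∀ a b : M, ∃! y, op y a = b)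

/-- `S` is a subloop of the loop `(M, op, e)`: it contains `e`, is closed under `op`,
and is itself a loop under the restricted operation. -/
def IsSubloop (op : M → M → M) (e : M) (S : Set M) : Prop :=
  e ∈ S ∧ (∀ a ∈ S, ∀ b ∈ S, op a b ∈ S) ∧
  (∀ a ∈ S, ∀ b ∈ S, ∃! x, x ∈ S ∧ op a x = b) ∧
  (∀ a ∈ S, ∀ b ∈ S, ∃! y, y ∈ S ∧ op y a = b)

/-- A subloop is non-trivial if it differs from `{e}` and from the whole loop. -/
def NontrivialSub (e : M) (S : Set M) : Prop := S ≠ {e} ∧ S ≠ Set.univ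

/-- The automorphism group `Aum(L)` of `(M, op)`. -/
def LoopAut (op : M → M → M) : Type u :=
  {f : M ≃ M // ∀ a b : M, f (op a b) = op (f a) (f b)}

/-- The holomorph operation `(α,x)∘(β,y) = (αβ, (xβ)·y)` on `Aum(L) × L`
(automorphisms act on the right, so `αβ` is `β ∘ α` as left-applied functions). -/
def holOp (op : M → M → M) : (LoopAut op × M) → (LoopAut op × M) → (LoopAut op × M) :=
  fun p q =>
    (⟨p.1.1.trans q.1.1, fun a b => by
        simp only [Equiv.trans_apply, p.1.2, q.1.2]⟩,
     op (q.1.1 p.2) q.2)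

/-- The identity element of the holomorph. -/
def holOne (op : M → M → M) (e : M) : LoopAut op × M :=
  (⟨Equiv.refl M, fun _ _ => rfl⟩, e)

/-- The operation induced on a subset closed under `op`. -/
def subOp (op : M → M → M) (S : Set M) (h : ∀ a ∈ S, ∀ b ∈ S, op a b ∈ S) :
    S → S → S :=
  fun a b => ⟨op a.1 b.1, h a.1 a.2 b.1 b.2⟩

end LoopDefs

section IsoDefs
variable {M : Type u} {N : Type v}

/-- Loop isomorphism: a bijection preserving the binary operations. -/
def LoopIso (op : M → M → M) (op' : N → N → N) : Prop :=
  ∃ f : M ≃ N, ∀ a b : M, f (op a b) = op' (f a) (f b)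

end IsoDefs

section GLoopDefs
variable {M : Type u}

/-- There is an isotopism `(A,B,C)` from `(M,op)` onto `(N,op')`. -/
def IsotopismExists {N : Type u} (op : M → M → M) (op' : N → N → N) : Prop :=
  ∃ A B C : M → N, Function.Bijective A ∧ Function.Bijective B ∧ Function.Bijective C ∧
    ∀ x y : M, op' (A x) (B y) = C (op x y)

/-- A G-loop: a loop isomorphic to every loop isotope of itself. -/
def IsGLoop (op : M → M → M) (e : M) : Prop :=
  IsLoop op e ∧ ∀ (N : Type u) (op' : N → N → N) (e' : N), IsLoop op' e' →
    IsotopismExists op op' → LoopIso op op'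

/-- A Smarandache G-loop: a loop with a non-trivial subloop that is a G-loop. -/
def IsSGLoop (op : M → M → M) (e : M) : Prop :=
  ∃ (S : Set M) (hS : IsSubloop op e S), NontrivialSub e S ∧
    IsGLoop (subOp op S hS.2.1) ⟨e, hS.1⟩

end GLoopDefs

section CCDefs
variable {M : Type u}

/-- A conjugacy closed loop: left (resp. right) translations are closed under
conjugation by left (resp. right) translations. -/
def IsCCLoop (op : M → M → M) : Prop :=
  ∀ x y : M, (∃ z : M, ∀ u : M, op x (op y u) = op z (op x u)) ∧
    (∃ w : M, ∀ u : M, op (op u y) x = op (op u x) w)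

/-- The subset `S` is conjugacy closed (as a loop in its own right). -/
def CCOn (op : M → M → M) (S : Set M) : Prop :=
  ∀ x ∈ S, ∀ y ∈ S, (∃ z ∈ S, ∀ u ∈ S, op x (op y u) = op z (op x u)) ∧
    (∃ w ∈ S, ∀ u ∈ S, op (op u y) x = op (op u x) w)

end CCDefs


section NormalDefs
variable {M : Type u}

/-- `H` is a normal subloop: `x·H = H·x`, `(x·H)·y = x·(H·y)` and `x·(y·H) = (x·y)·H`. -/
def IsNormalSubloop (op : M → M → M) (H : Set M) : Prop :=
  (∀ x : M, op x '' H = (fun h => op h x) '' H) ∧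
  (∀ x y : M, (fun a => op a y) '' (op x '' H) = op x '' ((fun h => op h y) '' H)) ∧
  (∀ x y : M, op x '' (op y '' H) = op (op x y) '' H)

end NormalDefs


namespace Stmt8Aux

variable {M : Type u}

noncomputable def ld (op : M → M → M) {e : M} (hL : IsLoop op e) (a b : M) : M :=
  (hL.2.2.1 a b).choose

theorem ld_spec (op : M → M → M) {e : M} (hL : IsLoop op e) (a b : M) :
    op a (ld op hL a b) = b := (hL.2.2.1 a b).choose_spec.1

theorem ld_eq (op : M → M → M) {e : M} (hL : IsLoop op e) {a b x : M}
    (h : op a x = b) : ld op hL a b = x :=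
  ((hL.2.2.1 a b).choose_spec.2 x h).symm

noncomputable def rd (op : M → M → M) {e : M} (hL : IsLoop op e) (a b : M) : M :=
  (hL.2.2.2 a b).choose

theorem rd_spec (op : M → M → M) {e : M} (hL : IsLoop op e) (a b : M) :
    op (rd op hL a b) a = b := (hL.2.2.2 a b).choose_spec.1

theorem rd_eq (op : M → M → M) {e : M} (hL : IsLoop op e) {a b y : M}
    (h : op y a = b) : rd op hL a b = y :=
  ((hL.2.2.2 a b).choose_spec.2 y h).symm

theorem lmul_bij (op : M → M → M) {e : M} (hL : IsLoop op e) (a : M) :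
    Function.Bijective (fun x => op a x) := by
  constructor
  · intro x y h
    simp only at h
    rw [← ld_eq op hL (rfl : op a x = op a x), h, ld_eq op hL rfl]
  · intro b
    exact ⟨ld op hL a b, ld_spec op hL a b⟩

theorem rmul_bij (op : M → M → M) {e : M} (hL : IsLoop op e) (a : M) :
    Function.Bijective (fun x => op x a) := by
  constructor
  · intro x y h
    simp only at h
    rw [← rd_eq op hL (rfl : op x a = op x a), h, rd_eq op hL rfl]
  · intro b
    exact ⟨rd op hL a b, rd_spec op hL a b⟩

theorem loop_transport {N : Type v} {op : M → M → M} {e : M} (hL : IsLoop op e)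
    {op' : N → N → N} {φ : M → N} (hbij : Function.Bijective φ)
    (hhom : ∀ a b, φ (op a b) = op' (φ a) (φ b))
    {e' : N} (he' : φ e = e') : IsLoop op' e' := by
  obtain ⟨hinj, hsurj⟩ := hbij
  subst he'
  refine ⟨?_, ?_, ?_, ?_⟩
  · intro a; obtain ⟨x, rfl⟩ := hsurj a
    rw [← hhom, hL.1]
  · intro a; obtain ⟨x, rfl⟩ := hsurj a
    rw [← hhom, hL.2.1]
  · intro a b
    obtain ⟨x, rfl⟩ := hsurj a; obtain ⟨y, rfl⟩ := hsurj b
    refine ⟨φ (ld op hL x y), (hhom x _).symm.trans (congrArg φ (ld_spec op hL x y)), ?_⟩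
    intro z hz
    obtain ⟨w, rfl⟩ := hsurj z
    rw [← hhom] at hz
    exact congrArg φ (ld_eq op hL (hinj hz)).symm
  · intro a b
    obtain ⟨x, rfl⟩ := hsurj a; obtain ⟨y, rfl⟩ := hsurj b
    refine ⟨φ (rd op hL x y), (hhom _ x).symm.trans (congrArg φ (rd_spec op hL x y)), ?_⟩
    intro z hz
    obtain ⟨w, rfl⟩ := hsurj z
    rw [← hhom] at hz
    exact congrArg φ (rd_eq op hL (hinj hz)).symm

theorem cc_transport {N : Type v} {op : M → M → M} (hCC : IsCCLoop op)
    {op' : N → N → N} {φ : M → N} (hsurj : Function.Surjective φ)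
    (hhom : ∀ a b, φ (op a b) = op' (φ a) (φ b)) : IsCCLoop op' := by
  intro x' y'
  obtain ⟨x, rfl⟩ := hsurj x'
  obtain ⟨y, rfl⟩ := hsurj y'
  constructor
  · obtain ⟨z, hz⟩ := (hCC x y).1
    refine ⟨φ z, fun u' => ?_⟩
    obtain ⟨u, rfl⟩ := hsurj u'
    rw [← hhom, ← hhom, ← hhom, ← hhom, hz u]
  · obtain ⟨w, hw⟩ := (hCC x y).2
    refine ⟨φ w, fun u' => ?_⟩
    obtain ⟨u, rfl⟩ := hsurj u'
    rw [← hhom, ← hhom, ← hhom, ← hhom, hw u]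

theorem left_iso {op : M → M → M} {e : M} (hL : IsLoop op e) (hCC : IsCCLoop op)
    (g : M) (x y : M) :
    op g (op x y) = op (rd op hL g (op g x)) (op g y) := by
  obtain ⟨z, hz⟩ := (hCC g x).1
  have h0 : op z g = op g x := by
    have := hz e; rw [hL.2.1, hL.2.1] at this; exact this.symm
  rw [rd_eq op hL h0, hz]

theorem right_iso {op : M → M → M} {e : M} (hL : IsLoop op e) (hCC : IsCCLoop op)
    (c : M) (x y : M) :
    op (op x y) c = op (op x c) (ld op hL c (op y c)) := by
  obtain ⟨w, hw⟩ := (hCC c y).2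
  have h0 : op c w = op y c := by
    have := hw e; rw [hL.1, hL.1] at this; exact this.symm
  rw [ld_eq op hL h0, hw]

theorem loopIso_trans {A : Type u} {B C : Type v} {opA : A → A → A}
    {opB : B → B → B} {opC : C → C → C}
    (h1 : LoopIso opA opB) (h2 : LoopIso opB opC) : LoopIso opA opC := by
  obtain ⟨f, hf⟩ := h1
  obtain ⟨g, hg⟩ := h2
  exact ⟨f.trans g, fun a b => by simp only [Equiv.trans_apply, hf, hg]⟩

theorem cc_gloop (op : M → M → M) (e : M) (hL : IsLoop op e) (hCC : IsCCLoop op) :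
    IsGLoop op e := by
  refine ⟨hL, ?_⟩
  intro N op' e' hN hIso
  obtain ⟨A, B, C, hA, hB, hC, hiso⟩ := hIso
  set f := (Equiv.ofBijective A hA).symm e' with hfdef
  set g := (Equiv.ofBijective B hB).symm e' with hgdef
  have hAf : A f = e' := (Equiv.ofBijective A hA).apply_symm_apply e'
  have hBg : B g = e' := (Equiv.ofBijective B hB).apply_symm_apply e'
  set op1 : M → M → M := fun x y => op (rd op hL g x) y with hop1
  have hhom1 : ∀ a b, op g (op a b) = op1 (op g a) (op g b) :=
    fun a b => left_iso hL hCC g a b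
  have hL1 : IsLoop op1 g :=
    loop_transport hL (lmul_bij op hL g) hhom1 (hL.2.1 g)
  have hCC1 : IsCCLoop op1 :=
    cc_transport hCC (lmul_bij op hL g).2 hhom1
  set c := op f g with hcdef
  set op2 : M → M → M := fun x y => op1 x (ld op1 hL1 c y) with hop2
  have iso1 : LoopIso op op1 :=
    ⟨Equiv.ofBijective _ (lmul_bij op hL g), hhom1⟩
  have iso2 : LoopIso op1 op2 :=
    ⟨Equiv.ofBijective _ (rmul_bij op1 hL1 c), fun a b => right_iso hL1 hCC1 c a b⟩
  have iso3 : LoopIso op2 op' := by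
    refine ⟨Equiv.ofBijective C hC, fun x y => ?_⟩
    have h1 : A (rd op hL g x) = C x := by
      have h := (hiso (rd op hL g x) g).symm
      rw [rd_spec op hL g x, hBg] at h
      rw [← hN.2.1 (A (rd op hL g x))]
      exact h.symm
    have h2 : B (ld op hL f y) = C y := by
      have h := (hiso f (ld op hL f y)).symm
      rw [ld_spec op hL f y, hAf] at h
      rw [← hN.1 (B (ld op hL f y))]
      exact h.symm
    have h3 : ld op1 hL1 c y = ld op hL f y := by
      apply ld_eq
      show op (rd op hL g c) (ld op hL f y) = y
      rw [rd_eq op hL (hcdef.symm)]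
      exact ld_spec op hL f y
    show C (op1 x (ld op1 hL1 c y)) = op' (C x) (C y)
    rw [h3]
    show C (op (rd op hL g x) (ld op hL f y)) = op' (C x) (C y)
    rw [← hiso, h1, h2]
  exact loopIso_trans iso1 (loopIso_trans iso2 iso3)

theorem subloop_isLoop {op : M → M → M} {e : M} {S : Set M}
    (hL : IsLoop op e) (hS : IsSubloop op e S) :
    IsLoop (subOp op S hS.2.1) ⟨e, hS.1⟩ := by
  refine ⟨fun a => Subtype.ext (hL.1 a.1), fun a => Subtype.ext (hL.2.1 a.1), ?_, ?_⟩
  · intro a b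
    obtain ⟨x, ⟨hxS, hx⟩, hu⟩ := hS.2.2.1 a.1 a.2 b.1 b.2
    refine ⟨⟨x, hxS⟩, Subtype.ext hx, ?_⟩
    intro y hy
    exact Subtype.ext (hu y.1 ⟨y.2, congrArg Subtype.val hy⟩)
  · intro a b
    obtain ⟨x, ⟨hxS, hx⟩, hu⟩ := hS.2.2.2 a.1 a.2 b.1 b.2
    refine ⟨⟨x, hxS⟩, Subtype.ext hx, ?_⟩
    intro y hy
    exact Subtype.ext (hu y.1 ⟨y.2, congrArg Subtype.val hy⟩)

theorem subloop_cc {op : M → M → M} {e : M} {S : Set M}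
    (hL : IsLoop op e) (hCC : IsCCLoop op) (hS : IsSubloop op e S) :
    IsCCLoop (subOp op S hS.2.1) := by
  intro x y
  constructor
  · obtain ⟨z, hz⟩ := (hCC x.1 y.1).1
    have hzx : op z x.1 = op x.1 y.1 := by
      have := hz e; rw [hL.2.1, hL.2.1] at this; exact this.symm
    obtain ⟨z', ⟨hz'S, hz'⟩, _⟩ :=
      hS.2.2.2 x.1 x.2 (op x.1 y.1) (hS.2.1 x.1 x.2 y.1 y.2)
    have hzz : z = z' := by
      rw [← rd_eq op hL hzx, rd_eq op hL hz']
    refine ⟨⟨z, hzz ▸ hz'S⟩, fun u => Subtype.ext (hz u.1)⟩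
  · obtain ⟨w, hw⟩ := (hCC x.1 y.1).2
    have hwx : op x.1 w = op y.1 x.1 := by
      have := hw e; rw [hL.1, hL.1] at this; exact this.symm
    obtain ⟨w', ⟨hw'S, hw'⟩, _⟩ :=
      hS.2.2.1 x.1 x.2 (op y.1 x.1) (hS.2.1 y.1 y.2 x.1 x.2)
    have hww : w = w' := by
      rw [← ld_eq op hL hwx, ld_eq op hL hw']
    refine ⟨⟨w, hww ▸ hw'S⟩, fun u => Subtype.ext (hw u.1)⟩

end Stmt8Aux

/-- the quotient of a CC-loop `G` by a normal subloop `H` is a G-loop;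
hence if it possesses a non-trivial subloop it is a Smarandache G-loop.
The quotient loop `G/H` is represented abstractly as a loop `Q` together with a
surjective loop homomorphism `π : G → Q` whose fibres are the cosets of `H`. -/
theorem stmt8 {M Q : Type u} (op : M → M → M) (e : M)
    (hL : IsLoop op e) (hCC : IsCCLoop op)
    (H : Set M) (hH : IsSubloop op e H) (hnorm : IsNormalSubloop op H)
    (opQ : Q → Q → Q) (eQ : Q) (hQ : IsLoop opQ eQ)
    (π : M → Q) (hsurj : Function.Surjective π) (hπe : π e = eQ)
    (hhom : ∀ a b : M, π (op a b) = opQ (π a) (π b))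
    (hker : ∀ a b : M, π a = π b ↔ ∃ h ∈ H, op a h = b) :
    IsGLoop opQ eQ ∧
    ((∃ S : Set Q, IsSubloop opQ eQ S ∧ NontrivialSub eQ S) → IsSGLoop opQ eQ) := by
  have hCCQ : IsCCLoop opQ := Stmt8Aux.cc_transport hCC hsurj hhom
  refine ⟨Stmt8Aux.cc_gloop opQ eQ hQ hCCQ, ?_⟩
  rintro ⟨S, hS, hnt⟩
  exact ⟨S, hS, hnt, Stmt8Aux.cc_gloop _ _ (Stmt8Aux.subloop_isLoop hQ hS)
    (Stmt8Aux.subloop_cc hQ hCCQ hS)⟩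
end

section
/- Let (L,·) be a loop with two-sided inverses and holomorph H(L). Then H(L) is an automorphic inverse property loop (AIPL) if and only if Aum(L) is abelian and ((x·β⁻¹)⁻¹)·(y⁻¹) = (x·(y·α⁻¹))⁻¹ for all x,y ∈ L and all α,β ∈ Aum(L), i.e., (xβ⁻¹)J · yJ = (x · yα⁻¹)J where J is the inversion map. -/
universe u v

section AIPDefs
variable {M : Type u}

/-- An automorphic inverse property loop: `(x·y)⁻¹ = x⁻¹·y⁻¹`. -/
def IsAIPL (op : M → M → M) (e : M) : Prop :=
  ∃ inv : M → M, (∀ x, op x (inv x) = e ∧ op (inv x) x = e) ∧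
    ∀ x y : M, inv (op x y) = op (inv x) (inv y)

/-- The subset `S` has the automorphic inverse property (as a loop in its own right). -/
def AIPOn (op : M → M → M) (e : M) (S : Set M) : Prop :=
  ∃ inv : M → M, (∀ x ∈ S, inv x ∈ S) ∧
    (∀ x ∈ S, op x (inv x) = e ∧ op (inv x) x = e) ∧
    ∀ x ∈ S, ∀ y ∈ S, inv (op x y) = op (inv x) (inv y)

end AIPDefs



section MyHelpers
variable {M : Type u} {op : M → M → M} {e : M}

lemma aut_fix_e (hL : IsLoop op e) (α : LoopAut op) : α.1 e = e := by
  have h1 : op (α.1 e) (α.1 e) = α.1 e := by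
    conv_rhs => rw [show (e : M) = op e e from (hL.1 e).symm]
    rw [α.2]
  have h2 : op (α.1 e) e = α.1 e := hL.2.1 _
  obtain ⟨x, hx, hu⟩ := hL.2.2.1 (α.1 e) (α.1 e)
  exact ((hu _ h1).trans (hu _ h2).symm)

def symmAut (α : LoopAut op) : LoopAut op :=
  ⟨α.1.symm, fun a b => α.1.injective (by
    rw [Equiv.apply_symm_apply, α.2, Equiv.apply_symm_apply, Equiv.apply_symm_apply])⟩

lemma right_inv_unique (hL : IsLoop op e) (inv : M → M)
    (hinv : ∀ x : M, op x (inv x) = e ∧ op (inv x) x = e)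
    {x y : M} (h : op x y = e) : y = inv x := by
  obtain ⟨z, hz, hu⟩ := hL.2.2.1 x e
  exact (hu _ h).trans (hu _ (hinv x).1).symm

lemma aut_inv (hL : IsLoop op e) (inv : M → M)
    (hinv : ∀ x : M, op x (inv x) = e ∧ op (inv x) x = e)
    (α : LoopAut op) (x : M) : α.1 (inv x) = inv (α.1 x) := by
  apply right_inv_unique hL inv hinv
  rw [← α.2, (hinv x).1, aut_fix_e hL]

end MyHelpers

/-- `H(L)` is an AIPL iff `Aum(L)` is abelian and
`(xβ⁻¹)J · yJ = (x · yα⁻¹)J` for all `x, y ∈ L` and `α, β ∈ Aum(L)`. -/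
theorem stmt17 {M : Type u} (op : M → M → M) (e : M) (hL : IsLoop op e)
    (inv : M → M) (hinv : ∀ x : M, op x (inv x) = e ∧ op (inv x) x = e) :
    IsAIPL (holOp op) (holOne op e) ↔
      ((∀ α β : LoopAut op, ∀ x : M, α.1 (β.1 x) = β.1 (α.1 x)) ∧
       ∀ (x y : M) (α β : LoopAut op),
         op (inv (β.1.symm x)) (inv y) = inv (op x (α.1.symm y))) := by
  constructor
  · rintro ⟨Inv, hI, hA⟩
    -- Inv is forced to be (symmAut p.1, inv (p.1.1.symm p.2))
    have hF : ∀ p : LoopAut op × M, ∀ z : M, (Inv p).1.1 (p.1.1 z) = z := by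
      intro p z
      have h1 := congrArg (fun r => r.1.1 z) (hI p).1
      simpa [holOp, holOne] using h1
    have hInv1 : ∀ p : LoopAut op × M, ∀ y : M, (Inv p).1.1 y = p.1.1.symm y := by
      intro p y
      conv_lhs => rw [← Equiv.apply_symm_apply p.1.1 y]
      exact hF p _
    have hInv2 : ∀ p : LoopAut op × M, (Inv p).2 = inv (p.1.1.symm p.2) := by
      intro p
      have h2 := congrArg Prod.snd (hI p).1
      simp only [holOp, holOne] at h2
      rw [hInv1 p] at h2
      exact right_inv_unique hL inv hinv h2
    constructor
    · intro α β x
      have h := congrArg (fun r => r.1.1 x) (hA (symmAut β, e) (symmAut α, e))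
      simp only [holOp, Equiv.trans_apply] at h
      rw [hInv1, hInv1, hInv1] at h
      simpa [symmAut, Equiv.trans_apply] using h.symm
    · intro x y α β
      have h := congrArg Prod.snd (hA (α, α.1 x) (β, β.1 y))
      simp only [holOp] at h
      rw [hInv2, hInv2, hInv2, hInv1] at h
      simp only [holOp, Equiv.symm_trans_apply, Equiv.symm_apply_apply] at h
      have hb : β.1.symm (op (β.1 (α.1 x)) (β.1 y)) = op (α.1 x) y := by
        have := (symmAut β).2 (β.1 (α.1 x)) (β.1 y)
        simpa [symmAut] using this
      rw [hb] at h
      have ha : α.1.symm (op (α.1 x) y) = op x (α.1.symm y) := by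
        have := (symmAut α).2 (α.1 x) y
        simpa [symmAut] using this
      rw [ha] at h
      have hbi : β.1.symm (inv x) = inv (β.1.symm x) := by
        simpa [symmAut] using aut_inv hL inv hinv (symmAut β) x
      rw [hbi] at h
      exact h.symm
  · rintro ⟨hcomm, heq⟩
    refine ⟨fun p => (symmAut p.1, inv (p.1.1.symm p.2)), fun p => ?_, fun p q => ?_⟩
    · constructor
      · refine Prod.ext ?_ ?_
        · apply Subtype.ext
          simp [holOp, holOne, symmAut, Equiv.self_trans_symm]
        · simp only [holOp, holOne, symmAut]
          exact (hinv _).1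
      · refine Prod.ext ?_ ?_
        · apply Subtype.ext
          simp [holOp, holOne, symmAut, Equiv.symm_trans_self]
        · simp only [holOp, holOne, symmAut]
          rw [aut_inv hL inv hinv p.1, Equiv.apply_symm_apply]
          exact (hinv _).2
    · refine Prod.ext ?_ ?_
      · apply Subtype.ext
        apply Equiv.ext
        intro z
        simp only [holOp, symmAut, Equiv.symm_trans_apply, Equiv.trans_apply]
        exact hcomm (symmAut p.1) (symmAut q.1) z
      · simp only [holOp, symmAut, Equiv.symm_trans_apply]
        have hb : q.1.1.symm (op (q.1.1 p.2) q.2) = op p.2 (q.1.1.symm q.2) := by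
          have := (symmAut q.1).2 (q.1.1 p.2) q.2
          simpa [symmAut] using this
        rw [hb]
        have ha : p.1.1.symm (op p.2 (q.1.1.symm q.2))
            = op (p.1.1.symm p.2) (p.1.1.symm (q.1.1.symm q.2)) := by
          have := (symmAut p.1).2 p.2 (q.1.1.symm q.2)
          simpa [symmAut] using this
        rw [ha]
        have haux : q.1.1.symm (inv (p.1.1.symm p.2)) = inv (q.1.1.symm (p.1.1.symm p.2)) := by
          simpa [symmAut] using aut_inv hL inv hinv (symmAut q.1) (p.1.1.symm p.2)
        rw [haux]
        exact (heq (p.1.1.symm p.2) (q.1.1.symm q.2) p.1 q.1).symm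
end
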